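/- arXiv:1503.06175 — 2 statements merged into one kernel-verified Lean document; each statement's English description precedes it below -/
import Mathlib

section
/- (Young's inequality / maximal inequality for abstract Riemann sums) Let Γ : {(s,t) : 0 ≤ s ≤ t ≤ T} → W be a map into a Banach space W, and let ω be a control, θ > 1 a constant, such that for all s ≤ u ≤ t, ‖Γ(s,t) − Γ(s,u) − Γ(u,t)‖ ≤ ω(s,t)^θ. Then the limit of ∑_k Γ(t_k, t_{k+1}) over partitions D of [0,T] as the mesh max_k ω(t_k,t_{k+1}) → 0 exists, and the limit I satisfies ‖I − Γ(0,T)‖ ≤ ζ(θ)·ω(0,T)^θ where ζ is the Riemann zeta function (up to a multiplicative constant 2^θ). -/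
/-!
Young's point-removal argument. For a partition `s = t₀ ≤ ⋯ ≤ t_{n+1} = t`, superadditivity of
`ω` gives `∑ₖ ω(tₖ, tₖ₊₂) ≤ 2 ω(s, t)`, so some interior point has `ω(tₖ, tₖ₊₂) ≤ 2 ω(s, t) / n`;
removing it changes the Riemann sum by at most `(2 ω(s, t) / n) ^ θ`. Removing the points one by
one gives the maximal inequality `‖S(D) - Γ(s, t)‖ ≤ 2^θ ζ(θ) ω(s, t)^θ` for every partition `D`.
Applying it on each interval of `D` inside a common refinement of `D` and `D'` and using
`∑ ω(tₖ, tₖ₊₁)^θ ≤ mesh(D)^(θ-1) ω(0, T)` shows that Riemann sums of partitions of mesh at most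
`δ` lie within `2^θ ζ(θ) δ^(θ-1) ω(0, T)` of each other, hence converge by completeness.
-/

open Finset Filter Topology

structure IsControl (T : ℝ) (ω : ℝ → ℝ → ℝ) : Prop where
  nonneg : ∀ s t, 0 ≤ s → s ≤ t → t ≤ T → 0 ≤ ω s t
  diag : ∀ s, ω s s = 0
  superadditive : ∀ s u t, 0 ≤ s → s ≤ u → u ≤ t → t ≤ T → ω s u + ω u t ≤ ω s t

def IsAlmostAdditive {W : Type*} [NormedAddCommGroup W] (T θ : ℝ) (ω : ℝ → ℝ → ℝ)
    (Γ : ℝ → ℝ → W) : Prop :=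
  ∀ s u t, 0 ≤ s → s ≤ u → u ≤ t → t ≤ T → ‖Γ s t - Γ s u - Γ u t‖ ≤ ω s t ^ θ

/-- A partition `u 0 ≤ ⋯ ≤ u n` is encoded by a monotone `u : ℕ → ℝ`; values beyond `n` play
no role. -/
def riemannSum {W : Type*} [AddCommMonoid W] (Γ : ℝ → ℝ → W) (u : ℕ → ℝ) (n : ℕ) : W :=
  ∑ k ∈ range n, Γ (u k) (u (k + 1))

noncomputable def sewingConstant (θ : ℝ) : ℝ :=
  2 ^ θ * ∑' n : ℕ, ((n : ℝ) + 1) ^ (-θ)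

lemma monotone_comp_min_of_le_succ {α : Type*} [Preorder α] {u : ℕ → α} {n : ℕ}
    (h : ∀ k < n, u k ≤ u (k + 1)) : Monotone fun k => u (min k n) :=
  monotone_nat_of_le_succ fun k => by
    rcases lt_or_ge k n with hk | hk
    · simpa [hk.le, Nat.succ_le_of_lt hk] using h k hk
    · simp [hk, hk.trans k.le_succ]

lemma Finset.Nonempty.exists_monotone_enumeration {α : Type*} [LinearOrder α] {F : Finset α}
    (hF : F.Nonempty) :
    ∃ (m : ℕ) (v : ℕ → α), Monotone v ∧ (∀ j ≤ m, v j ∈ F) ∧ ∀ x ∈ F, ∃ j ≤ m, v j = x := by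
  obtain ⟨m, hm⟩ : ∃ m, F.card = m + 1 := ⟨F.card - 1, by have := hF.card_pos; omega⟩
  refine ⟨m, fun j => F.orderEmbOfFin hm (Fin.clamp j m), fun i j hij => ?_,
    fun j _ => F.orderEmbOfFin_mem hm _, fun x hx => ?_⟩
  · exact (F.orderEmbOfFin hm).monotone (Fin.mk_le_mk.2 (min_le_min_right m hij))
  · obtain ⟨i, rfl⟩ : x ∈ Set.range (F.orderEmbOfFin hm) := by
      rwa [range_orderEmbOfFin]
    exact ⟨i, Nat.lt_succ_iff.1 i.2, congrArg _ (Fin.ext (min_eq_left (Nat.lt_succ_iff.1 i.2)))⟩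

lemma exists_common_refinement {α : Type*} [LinearOrder α] {u w : ℕ → α} {n p : ℕ}
    (hu : Monotone u) (hw : Monotone w) (h0 : u 0 = w 0) (hn : u n = w p) :
    ∃ (m : ℕ) (v : ℕ → α), Monotone v ∧ v 0 = u 0 ∧ v m = u n ∧
      (∀ k ≤ n, ∃ j ≤ m, v j = u k) ∧ ∀ k ≤ p, ∃ j ≤ m, v j = w k := by
  classical
  set F := (range (n + 1)).image u ∪ (range (p + 1)).image w
  have hmem_u : ∀ k ≤ n, u k ∈ F := fun k hk =>
    mem_union_left _ (mem_image_of_mem u (mem_range.2 (Nat.lt_succ_of_le hk)))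
  have hmem_w : ∀ k ≤ p, w k ∈ F := fun k hk =>
    mem_union_right _ (mem_image_of_mem w (mem_range.2 (Nat.lt_succ_of_le hk)))
  have hbounds : ∀ x ∈ F, u 0 ≤ x ∧ x ≤ u n := by
    intro x hx
    rcases mem_union.1 hx with hx | hx <;> obtain ⟨k, hk, rfl⟩ := mem_image.1 hx <;>
      have hk := Nat.lt_succ_iff.1 (mem_range.1 hk)
    · exact ⟨hu (Nat.zero_le k), hu hk⟩
    · exact ⟨h0 ▸ hw (Nat.zero_le k), hn ▸ hw hk⟩
  obtain ⟨m, v, hv, hvF, hFv⟩ := Finset.Nonempty.exists_monotone_enumeration ⟨_, hmem_u 0 n.zero_le⟩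
  obtain ⟨i, -, hi⟩ := hFv _ (hmem_u 0 n.zero_le)
  obtain ⟨j, hj, hj'⟩ := hFv _ (hmem_u n le_rfl)
  refine ⟨m, v, hv, ?_, ?_, fun k hk => hFv _ (hmem_u k hk), fun k hk => hFv _ (hmem_w k hk)⟩
  · exact le_antisymm (hi ▸ hv i.zero_le) (hbounds _ (hvF 0 m.zero_le)).1
  · exact le_antisymm (hbounds _ (hvF m le_rfl)).2 (hj' ▸ hv hj)

lemma summable_nat_add_one_rpow_neg {θ : ℝ} (hθ : 1 < θ) :
    Summable fun n : ℕ => ((n : ℝ) + 1) ^ (-θ) := by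
  refine ((summable_nat_add_iff 1).2 (Real.summable_nat_rpow.2 (neg_lt_neg hθ))).congr fun n => ?_
  push_cast
  rfl

lemma exists_forall_dist_le_of_dist_le {X : Type*} [PseudoMetricSpace X] [CompleteSpace X]
    (R : ℝ → Set X) (b : ℝ → ℝ) (hR : ∀ δ > 0, (R δ).Nonempty) (hb : Tendsto b (𝓝[>] 0) (𝓝 0))
    (hdist : ∀ δ₁ > 0, ∀ δ₂ > 0, ∀ x ∈ R δ₁, ∀ y ∈ R δ₂, dist x y ≤ b δ₁ + b δ₂) :
    ∃ I, ∀ δ > 0, ∀ x ∈ R δ, dist x I ≤ b δ := by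
  have hpos : ∀ q : ℕ, (0 : ℝ) < 1 / (q + 1) := fun q => by positivity
  choose x hx using fun q : ℕ => hR _ (hpos q)
  have hbq : Tendsto (fun q : ℕ => b (1 / (q + 1))) atTop (𝓝 0) :=
    hb.comp (tendsto_nhdsWithin_iff.2 ⟨tendsto_one_div_add_atTop_nhds_zero_nat,
      Eventually.of_forall hpos⟩)
  have hcauchy : CauchySeq x := Metric.cauchySeq_iff'.2 fun ε hε => by
    obtain ⟨N, hN⟩ := eventually_atTop.1 (hbq.eventually (gt_mem_nhds (half_pos hε)))
    refine ⟨N, fun q hq => ?_⟩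
    linarith [hdist _ (hpos q) _ (hpos N) _ (hx q) _ (hx N), hN q hq, hN N le_rfl]
  obtain ⟨I, hI⟩ := cauchySeq_tendsto_of_complete hcauchy
  refine ⟨I, fun δ hδ y hy => ?_⟩
  have hlim : Tendsto (fun q : ℕ => b δ + b (1 / (q + 1))) atTop (𝓝 (b δ)) := by
    simpa using hbq.const_add (b δ)
  exact le_of_tendsto_of_tendsto' (tendsto_const_nhds.dist hI) hlim
    fun q => hdist _ hδ _ (hpos q) _ hy _ (hx q)

section RiemannSum

variable {W : Type*}

@[simp]
lemma riemannSum_zero [AddCommMonoid W] (Γ : ℝ → ℝ → W) (u : ℕ → ℝ) : riemannSum Γ u 0 = 0 :=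
  sum_range_zero _

lemma riemannSum_succ [AddCommMonoid W] (Γ : ℝ → ℝ → W) (u : ℕ → ℝ) (n : ℕ) :
    riemannSum Γ u (n + 1) = riemannSum Γ u n + Γ (u n) (u (n + 1)) :=
  sum_range_succ _ _

lemma riemannSum_add [AddCommMonoid W] (Γ : ℝ → ℝ → W) (u : ℕ → ℝ) (j l : ℕ) :
    riemannSum Γ u (j + l) = riemannSum Γ u j + riemannSum Γ (fun i => u (j + i)) l := by
  simp only [riemannSum, sum_range_add, add_assoc]

lemma riemannSum_congr [AddCommMonoid W] (Γ : ℝ → ℝ → W) {u v : ℕ → ℝ} {n : ℕ}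
    (h : ∀ k ≤ n, u k = v k) : riemannSum Γ u n = riemannSum Γ v n :=
  sum_congr rfl fun k hk => by
    rw [h k (mem_range.1 hk).le, h (k + 1) (mem_range.1 hk)]

lemma riemannSum_eq_riemannSum_erase [AddCommGroup W] (Γ : ℝ → ℝ → W) (u : ℕ → ℝ) {k n : ℕ}
    (hk : k ≤ n) :
    riemannSum Γ u (n + 2) =
      riemannSum Γ (fun j => u (if j ≤ k then j else j + 1)) (n + 1) +
        (Γ (u k) (u (k + 1)) + Γ (u (k + 1)) (u (k + 2)) - Γ (u k) (u (k + 2))) := by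
  induction n, hk using Nat.le_induction with
  | base =>
    have hprefix : riemannSum Γ (fun j => u (if j ≤ k then j else j + 1)) k = riemannSum Γ u k :=
      riemannSum_congr Γ fun j hj => by simp [hj]
    simp only [riemannSum_succ, hprefix, le_refl, if_true, show ¬k + 1 ≤ k by omega, if_false]
    abel
  | succ n hkn ih =>
    rw [riemannSum_succ, ih, riemannSum_succ _ _ (n + 1),
      if_neg (show ¬n + 1 ≤ k by omega), if_neg (show ¬n + 1 + 1 ≤ k by omega)]
    abel

end RiemannSum

namespace IsControl

variable {T : ℝ} {ω : ℝ → ℝ → ℝ} {u : ℕ → ℝ}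

lemma sum_le (hω : IsControl T ω) (hu : Monotone u) (h0 : 0 ≤ u 0) :
    ∀ {n : ℕ}, u n ≤ T → ∑ k ∈ range n, ω (u k) (u (k + 1)) ≤ ω (u 0) (u n)
  | 0, _ => by simp [hω.diag]
  | n + 1, hT => by
    rw [sum_range_succ]
    have := hω.superadditive _ _ _ h0 (hu (Nat.zero_le n)) (hu n.le_succ) hT
    linarith [hω.sum_le hu h0 ((hu n.le_succ).trans hT)]

lemma sum_two_step_le (hω : IsControl T ω) (hu : Monotone u) (h0 : 0 ≤ u 0) :
    ∀ {n : ℕ}, u (n + 1) ≤ T →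
      ∑ k ∈ range n, ω (u k) (u (k + 2)) ≤ ω (u 0) (u n) + ω (u 0) (u (n + 1))
  | 0, hT => by
    simp only [range_zero, sum_empty, hω.diag, zero_add]
    exact hω.nonneg _ _ h0 (hu (Nat.zero_le 1)) hT
  | n + 1, hT => by
    rw [sum_range_succ]
    have := hω.superadditive _ _ _ h0 (hu (Nat.zero_le n)) (hu (by omega)) hT
    linarith [hω.sum_two_step_le hu h0 ((hu (n + 1).le_succ).trans hT)]

lemma exists_two_step_le (hω : IsControl T ω) (hu : Monotone u) (h0 : 0 ≤ u 0) {n : ℕ}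
    (hT : u (n + 2) ≤ T) :
    ∃ k ≤ n, ω (u k) (u (k + 2)) ≤ 2 * ω (u 0) (u (n + 2)) / (n + 1) := by
  have hsum : ∑ k ∈ range (n + 1), ω (u k) (u (k + 2)) ≤
      ∑ _k ∈ range (n + 1), 2 * ω (u 0) (u (n + 2)) / (n + 1) := by
    rw [sum_const, card_range, nsmul_eq_mul, Nat.cast_succ, mul_div_cancel₀ _ (by positivity)]
    have := hω.superadditive _ _ _ h0 (hu (Nat.zero_le (n + 1))) (hu (n + 1).le_succ) hT
    have := hω.nonneg _ _ (h0.trans (hu (Nat.zero_le (n + 1)))) (hu (n + 1).le_succ) hT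
    linarith [hω.sum_two_step_le hu h0 hT]
  obtain ⟨k, hk, hle⟩ := exists_le_of_sum_le nonempty_range_add_one hsum
  exact ⟨k, Nat.lt_succ_iff.1 (mem_range.1 hk), hle⟩

lemma sum_rpow_le (hω : IsControl T ω) (hu : Monotone u) (h0 : 0 ≤ u 0) {n : ℕ} (hT : u n ≤ T)
    {θ δ : ℝ} (hθ : 1 ≤ θ) (hmesh : ∀ k < n, ω (u k) (u (k + 1)) ≤ δ) :
    ∑ k ∈ range n, ω (u k) (u (k + 1)) ^ θ ≤ δ ^ (θ - 1) * ω (u 0) (u n) := by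
  calc ∑ k ∈ range n, ω (u k) (u (k + 1)) ^ θ
      ≤ ∑ k ∈ range n, δ ^ (θ - 1) * ω (u k) (u (k + 1)) := by
        refine sum_le_sum fun k hk => ?_
        have hk := mem_range.1 hk
        have hωk := hω.nonneg _ _ (h0.trans (hu (Nat.zero_le k))) (hu k.le_succ)
          ((hu hk).trans hT)
        calc ω (u k) (u (k + 1)) ^ θ = ω (u k) (u (k + 1)) ^ (θ - 1) * ω (u k) (u (k + 1)) := by
              conv_lhs => rw [← sub_add_cancel θ 1]
              rw [Real.rpow_add' hωk (by linarith), Real.rpow_one]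
          _ ≤ δ ^ (θ - 1) * ω (u k) (u (k + 1)) :=
              mul_le_mul_of_nonneg_right (Real.rpow_le_rpow hωk (hmesh k hk) (by linarith)) hωk
    _ = δ ^ (θ - 1) * ∑ k ∈ range n, ω (u k) (u (k + 1)) := (mul_sum _ _ _).symm
    _ ≤ δ ^ (θ - 1) * ω (u 0) (u n) := by
        rcases n.eq_zero_or_pos with rfl | hn
        · simp [hω.diag]
        have hδ : 0 ≤ δ := (hω.nonneg _ _ h0 (hu (Nat.zero_le 1))
          ((hu hn).trans hT)).trans (hmesh 0 hn)
        gcongr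
        exact hω.sum_le hu h0 hT

end IsControl

lemma exists_partition_forall_lt {T : ℝ} (hT : 0 ≤ T) {ω : ℝ → ℝ → ℝ} (hdiag : ∀ s, ω s s = 0)
    (hcont : Continuous fun q : ℝ × ℝ => ω q.1 q.2) {δ : ℝ} (hδ : 0 < δ) :
    ∃ (n : ℕ) (u : ℕ → ℝ), Monotone u ∧ u 0 = 0 ∧ u n = T ∧
      ∀ k < n, ω (u k) (u (k + 1)) < δ := by
  have hK : IsCompact (Set.Icc 0 T ×ˢ Set.Icc 0 T) := isCompact_Icc.prod isCompact_Icc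
  obtain ⟨h, hh, hclose⟩ := Metric.uniformContinuousOn_iff.1
    (hK.uniformContinuousOn_of_continuous hcont.continuousOn) δ hδ
  obtain ⟨N, hN⟩ := exists_nat_gt (T / h)
  have hN0 : (0 : ℝ) < N := (div_nonneg hT hh.le).trans_lt hN
  have hstep : T / N < h := by rwa [div_lt_iff₀ hN0, mul_comm, ← div_lt_iff₀ hh]
  set u : ℕ → ℝ := fun k => k * (T / N)
  have hmem : ∀ k ≤ N, u k ∈ Set.Icc 0 T := fun k hk =>
    ⟨by positivity, (mul_le_mul_of_nonneg_right (Nat.cast_le.2 hk) (by positivity)).trans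
      (mul_div_cancel₀ T hN0.ne').le⟩
  refine ⟨N, u, fun i j hij => mul_le_mul_of_nonneg_right (Nat.cast_le.2 hij) (by positivity),
    by simp [u], mul_div_cancel₀ T hN0.ne', fun k hk => ?_⟩
  have := hclose (u k, u (k + 1)) ⟨hmem k hk.le, hmem (k + 1) hk⟩ (u k, u k)
    ⟨hmem k hk.le, hmem k hk.le⟩ ?_
  · simpa [hdiag, Real.dist_eq] using (le_abs_self _).trans_lt this
  · simpa [Prod.dist_eq, Real.dist_eq, u, add_mul, abs_of_nonneg hT]
      using ⟨hh, hstep⟩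

section Sewing

variable {W : Type*} [NormedAddCommGroup W] {T θ : ℝ} {ω : ℝ → ℝ → ℝ} {Γ : ℝ → ℝ → W}

lemma IsAlmostAdditive.apply_self_eq_zero (hΓ : IsAlmostAdditive T θ ω Γ) (hθ : θ ≠ 0) {s : ℝ}
    (hdiag : ω s s = 0) (h0 : 0 ≤ s) (hT : s ≤ T) : Γ s s = 0 := by
  have := hΓ s s s h0 le_rfl le_rfl hT
  rwa [hdiag, Real.zero_rpow hθ, sub_self, zero_sub, norm_neg, norm_le_zero_iff] at this

lemma norm_riemannSum_succ_sub_le (hω : IsControl T ω) (hθ : 0 ≤ θ)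
    (hΓ : IsAlmostAdditive T θ ω Γ) :
    ∀ {n : ℕ} {u : ℕ → ℝ}, Monotone u → 0 ≤ u 0 → u (n + 1) ≤ T →
      ‖riemannSum Γ u (n + 1) - Γ (u 0) (u (n + 1))‖ ≤
        ∑ m ∈ range n, (2 * ω (u 0) (u (n + 1)) / (m + 1)) ^ θ
  | 0, u, _, _, _ => by simp [riemannSum]
  | n + 1, u, hu, h0, hT => by
    obtain ⟨k, hkn, hk⟩ := hω.exists_two_step_le hu h0 hT
    set u' : ℕ → ℝ := fun j => u (if j ≤ k then j else j + 1)
    have hu' : Monotone u' := hu.comp fun i j hij => by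
      split_ifs <;> omega
    have hu'0 : u' 0 = u 0 := by simp [u']
    have hu'n : u' (n + 1) = u (n + 2) := by simp [u', show ¬n + 1 ≤ k by omega]
    have hdefect : ‖Γ (u k) (u (k + 1)) + Γ (u (k + 1)) (u (k + 2)) - Γ (u k) (u (k + 2))‖ ≤
        (2 * ω (u 0) (u (n + 2)) / (n + 1)) ^ θ := by
      have hk0 : 0 ≤ u k := h0.trans (hu (Nat.zero_le k))
      have hkT : u (k + 2) ≤ T := (hu (by omega)).trans hT
      rw [← norm_neg, show ∀ a b c : W, -(a + b - c) = c - a - b by intros; abel]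
      calc _ ≤ ω (u k) (u (k + 2)) ^ θ :=
            hΓ _ _ _ hk0 (hu k.le_succ) (hu (k + 1).le_succ) hkT
        _ ≤ _ := Real.rpow_le_rpow (hω.nonneg _ _ hk0 (hu (by omega)) hkT) hk hθ
    have ih := norm_riemannSum_succ_sub_le hω hθ hΓ hu' (hu'0 ▸ h0) (hu'n ▸ hT)
    rw [hu'0, hu'n] at ih
    calc ‖riemannSum Γ u (n + 2) - Γ (u 0) (u (n + 2))‖
        ≤ ‖riemannSum Γ u' (n + 1) - Γ (u 0) (u (n + 2))‖ +
          ‖Γ (u k) (u (k + 1)) + Γ (u (k + 1)) (u (k + 2)) - Γ (u k) (u (k + 2))‖ := by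
          rw [riemannSum_eq_riemannSum_erase Γ u hkn, add_sub_right_comm]
          exact norm_add_le _ _
      _ ≤ ∑ m ∈ range (n + 1), (2 * ω (u 0) (u (n + 2)) / (m + 1)) ^ θ := by
          rw [sum_range_succ]
          exact add_le_add ih hdefect

lemma norm_riemannSum_sub_le (hω : IsControl T ω) (hθ : 1 < θ) (hΓ : IsAlmostAdditive T θ ω Γ)
    {n : ℕ} {u : ℕ → ℝ} (hu : Monotone u) (h0 : 0 ≤ u 0) (hT : u n ≤ T) :
    ‖riemannSum Γ u n - Γ (u 0) (u n)‖ ≤ sewingConstant θ * ω (u 0) (u n) ^ θ := by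
  obtain _ | n := n
  · rw [riemannSum_zero, hΓ.apply_self_eq_zero (by positivity) (hω.diag _) h0 hT, hω.diag,
      Real.zero_rpow (by positivity), sub_zero, norm_zero, mul_zero]
  have hωn : 0 ≤ ω (u 0) (u (n + 1)) := hω.nonneg _ _ h0 (hu (Nat.zero_le _)) hT
  refine (norm_riemannSum_succ_sub_le hω (by positivity) hΓ hu h0 hT).trans ?_
  have hterm : ∀ m : ℕ, (2 * ω (u 0) (u (n + 1)) / (m + 1)) ^ θ =
      2 ^ θ * ((m : ℝ) + 1) ^ (-θ) * ω (u 0) (u (n + 1)) ^ θ := fun m => by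
    rw [Real.div_rpow (by positivity) (by positivity), Real.mul_rpow (by norm_num) hωn,
      Real.rpow_neg (by positivity)]
    ring
  simp only [hterm, ← sum_mul, ← mul_sum, sewingConstant]
  gcongr
  exact (summable_nat_add_one_rpow_neg hθ).sum_le_tsum _ fun m _ => by positivity

lemma norm_riemannSum_sub_le_of_refines (hω : IsControl T ω) (hθ : 1 < θ)
    (hΓ : IsAlmostAdditive T θ ω Γ) {u : ℕ → ℝ} (hu : Monotone u) (h0 : 0 ≤ u 0) :
    ∀ {n m : ℕ} {v : ℕ → ℝ}, u n ≤ T → Monotone v → v 0 = u 0 → v m = u n →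
      (∀ k ≤ n, ∃ j ≤ m, v j = u k) →
      ‖riemannSum Γ v m - riemannSum Γ u n‖ ≤
        sewingConstant θ * ∑ k ∈ range n, ω (u k) (u (k + 1)) ^ θ
  | 0, m, v, hT, hv, hv0, hvm, _ => by
    have := norm_riemannSum_sub_le hω hθ hΓ hv (hv0 ▸ h0) (hvm ▸ hT)
    rw [hv0, hvm, hω.diag, Real.zero_rpow (by positivity), mul_zero,
      hΓ.apply_self_eq_zero (by positivity) (hω.diag _) h0 hT, ← riemannSum_zero Γ u] at this
    simpa using this
  | n + 1, m, v, hT, hv, hv0, hvm, hsub => by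
    obtain ⟨j, hjm, hvj⟩ := hsub n n.le_succ
    have hnT : u n ≤ T := (hu n.le_succ).trans hT
    have hprefix : ∀ k ≤ n, ∃ i ≤ j, v i = u k := fun k hk => by
      obtain ⟨i, him, hvi⟩ := hsub k (hk.trans n.le_succ)
      rcases le_or_gt i j with hij | hji
      · exact ⟨i, hij, hvi⟩
      · exact ⟨j, le_rfl, hvj.trans (le_antisymm (hu hk) (hvj ▸ hvi ▸ hv hji.le)).symm⟩
    have hhead := norm_riemannSum_sub_le_of_refines hω hθ hΓ hu h0 hnT hv hv0 hvj hprefix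
    have htail := norm_riemannSum_sub_le hω hθ hΓ (u := fun i => v (j + i)) (n := m - j)
      (fun a b hab => hv (by omega)) (by simpa [hvj] using h0.trans (hu (Nat.zero_le n)))
      (by simpa [Nat.add_sub_cancel' hjm, hvm] using hT)
    simp only [add_zero, Nat.add_sub_cancel' hjm, hvj, hvm] at htail
    rw [← Nat.add_sub_cancel' hjm, riemannSum_add, riemannSum_succ, sum_range_succ, mul_add,
      add_sub_add_comm]
    exact (norm_add_le _ _).trans (add_le_add hhead htail)

lemma norm_riemannSum_sub_riemannSum_le (hω : IsControl T ω) (hθ : 1 < θ)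
    (hΓ : IsAlmostAdditive T θ ω Γ) {n p : ℕ} {u w : ℕ → ℝ} (hu : Monotone u) (hw : Monotone w)
    (h0 : 0 ≤ u 0) (hT : u n ≤ T) (huw0 : u 0 = w 0) (huwn : u n = w p) {δ₁ δ₂ : ℝ}
    (hu_mesh : ∀ k < n, ω (u k) (u (k + 1)) ≤ δ₁) (hw_mesh : ∀ k < p, ω (w k) (w (k + 1)) ≤ δ₂) :
    ‖riemannSum Γ u n - riemannSum Γ w p‖ ≤
      sewingConstant θ * (δ₁ ^ (θ - 1) + δ₂ ^ (θ - 1)) * ω (u 0) (u n) := by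
  obtain ⟨m, v, hv, hv0, hvm, hvu, hvw⟩ := exists_common_refinement hu hw huw0 huwn
  have hC : 0 ≤ sewingConstant θ := by unfold sewingConstant; positivity
  have hu_ref := norm_riemannSum_sub_le_of_refines hω hθ hΓ hu h0 hT hv hv0 hvm hvu
  have hw_ref := norm_riemannSum_sub_le_of_refines hω hθ hΓ hw (huw0 ▸ h0) (huwn ▸ hT) hv
    (hv0.trans huw0) (hvm.trans huwn) hvw
  have hu_sum := hω.sum_rpow_le hu h0 hT hθ.le hu_mesh
  have hw_sum := hω.sum_rpow_le hw (huw0 ▸ h0) (huwn ▸ hT) hθ.le hw_mesh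
  rw [← huw0, ← huwn] at hw_sum
  calc ‖riemannSum Γ u n - riemannSum Γ w p‖
      ≤ ‖riemannSum Γ v m - riemannSum Γ u n‖ + ‖riemannSum Γ v m - riemannSum Γ w p‖ := by
        rw [← dist_eq_norm, ← dist_eq_norm, ← dist_eq_norm]
        exact dist_triangle_left _ _ _
    _ ≤ sewingConstant θ * (δ₁ ^ (θ - 1) * ω (u 0) (u n)) +
        sewingConstant θ * (δ₂ ^ (θ - 1) * ω (u 0) (u n)) :=
        add_le_add (hu_ref.trans (by gcongr)) (hw_ref.trans (by gcongr))
    _ = _ := by ring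

end Sewing

theorem sewing_lemma_general
    {W : Type*} [NormedAddCommGroup W] [CompleteSpace W]
    (T : ℝ) (hT : 0 ≤ T) (ω : ℝ → ℝ → ℝ)
    (hnonneg : ∀ s t : ℝ, 0 ≤ s → s ≤ t → t ≤ T → 0 ≤ ω s t)
    (hdiag : ∀ s : ℝ, ω s s = 0)
    (hcont : Continuous fun q : ℝ × ℝ => ω q.1 q.2)
    (hsuper : ∀ s u t : ℝ, 0 ≤ s → s ≤ u → u ≤ t → t ≤ T →
      ω s u + ω u t ≤ ω s t)
    (θ : ℝ) (hθ : 1 < θ) (Γ : ℝ → ℝ → W)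
    (halmost : ∀ s u t : ℝ, 0 ≤ s → s ≤ u → u ≤ t → t ≤ T →
      ‖Γ s t - Γ s u - Γ u t‖ ≤ ω s t ^ θ) :
    ∃ I : W,
      ‖I - Γ 0 T‖ ≤ (2 : ℝ) ^ θ * (∑' n : ℕ, ((n : ℝ) + 1) ^ (-θ)) * ω 0 T ^ θ ∧
      ∀ ε > (0 : ℝ), ∃ δ > (0 : ℝ),
        ∀ (n : ℕ) (u : ℕ → ℝ), 0 < n → u 0 = 0 → u n = T →
          (∀ k, k < n → u k ≤ u (k + 1)) →
          (∀ k, k < n → ω (u k) (u (k + 1)) < δ) →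
          ‖(∑ k ∈ Finset.range n, Γ (u k) (u (k + 1))) - I‖ < ε := by
  have hω : IsControl T ω := ⟨hnonneg, hdiag, hsuper⟩
  let R : ℝ → Set W := fun δ => {x | ∃ (n : ℕ) (u : ℕ → ℝ), Monotone u ∧ u 0 = 0 ∧ u n = T ∧
    (∀ k < n, ω (u k) (u (k + 1)) < δ) ∧ riemannSum Γ u n = x}
  let b : ℝ → ℝ := fun δ => sewingConstant θ * δ ^ (θ - 1) * ω 0 T
  have hb : Tendsto b (𝓝[>] 0) (𝓝 0) := by
    have := (Real.continuousAt_rpow_const 0 (θ - 1) (Or.inr (by linarith))).tendsto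
    simpa [b, Real.zero_rpow (by linarith : θ - 1 ≠ 0)] using
      ((this.const_mul _).mul_const _).mono_left nhdsWithin_le_nhds
  have hR : ∀ δ > 0, (R δ).Nonempty := fun δ hδ => by
    obtain ⟨n, u, hu, hu0, hun, hmesh⟩ := exists_partition_forall_lt hT hdiag hcont hδ
    exact ⟨_, n, u, hu, hu0, hun, hmesh, rfl⟩
  have hRΓ : ∀ δ, ∀ x ∈ R δ, ‖x - Γ 0 T‖ ≤ sewingConstant θ * ω 0 T ^ θ := by
    rintro δ _ ⟨n, u, hu, hu0, hun, -, rfl⟩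
    simpa [hu0, hun] using norm_riemannSum_sub_le hω hθ halmost hu hu0.ge hun.le
  obtain ⟨I, hI⟩ := exists_forall_dist_le_of_dist_le R b hR hb <| by
    rintro δ₁ - δ₂ - _ ⟨n, u, hu, hu0, hun, hmu, rfl⟩ _ ⟨p, w, hw, hw0, hwp, hmw, rfl⟩
    have := norm_riemannSum_sub_riemannSum_le hω hθ halmost hu hw hu0.ge hun.le
      (hu0.trans hw0.symm) (hun.trans hwp.symm) (fun k hk => (hmu k hk).le)
      (fun k hk => (hmw k hk).le)
    rw [dist_eq_norm]
    linarith [hu0 ▸ hun ▸ this]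
  refine ⟨I, ?_, fun ε hε => ?_⟩
  · have hlim := hb.add_const (sewingConstant θ * ω 0 T ^ θ)
    rw [zero_add] at hlim
    refine ge_of_tendsto hlim (eventually_nhdsWithin_of_forall fun δ hδ => ?_)
    obtain ⟨x, hx⟩ := hR δ hδ
    rw [← dist_eq_norm]
    linarith [dist_triangle_left I (Γ 0 T) x, hI δ hδ x hx, dist_eq_norm x (Γ 0 T) ▸ hRΓ δ x hx]
  · obtain ⟨δ, hbδ, hδ⟩ := ((hb.eventually (gt_mem_nhds hε)).and self_mem_nhdsWithin).exists
    refine ⟨δ, hδ, fun n u _ hu0 hun hstep hmesh => ?_⟩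
    have hmem : riemannSum Γ u n ∈ R δ :=
      ⟨n, fun k => u (min k n), monotone_comp_min_of_le_succ hstep, by simpa using hu0,
        by simpa using hun, fun k hk => by simpa [hk.le, Nat.succ_le_of_lt hk] using hmesh k hk,
        riemannSum_congr Γ fun k hk => by simp [hk]⟩
    rw [← dist_eq_norm]
    exact (hI δ hδ _ hmem).trans_lt hbδ

/-- Sewing lemma / Young's maximal inequality: if `Γ` is almost additive with
defect bounded by `ω(s,t)^θ`, `θ > 1`, then the Riemann sums
`∑ Γ(t_k, t_{k+1})` converge as the `ω`-mesh tends to zero, and the limit `I`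
satisfies `‖I − Γ(0,T)‖ ≤ 2^θ ζ(θ) ω(0,T)^θ`. -/
theorem sewing_lemma
    {W : Type*} [NormedAddCommGroup W] [NormedSpace ℝ W] [CompleteSpace W]
    (T : ℝ) (hT : 0 ≤ T) (ω : ℝ → ℝ → ℝ)
    (hnonneg : ∀ s t : ℝ, 0 ≤ s → s ≤ t → t ≤ T → 0 ≤ ω s t)
    (hdiag : ∀ s : ℝ, ω s s = 0)
    (hcont : Continuous fun q : ℝ × ℝ => ω q.1 q.2)
    (hsuper : ∀ s u t : ℝ, 0 ≤ s → s ≤ u → u ≤ t → t ≤ T →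
      ω s u + ω u t ≤ ω s t)
    (θ : ℝ) (hθ : 1 < θ) (Γ : ℝ → ℝ → W)
    (halmost : ∀ s u t : ℝ, 0 ≤ s → s ≤ u → u ≤ t → t ≤ T →
      ‖Γ s t - Γ s u - Γ u t‖ ≤ ω s t ^ θ) :
    ∃ I : W,
      ‖I - Γ 0 T‖ ≤ (2 : ℝ) ^ θ * (∑' n : ℕ, ((n : ℝ) + 1) ^ (-θ)) * ω 0 T ^ θ ∧
      ∀ ε > (0 : ℝ), ∃ δ > (0 : ℝ),
        ∀ (n : ℕ) (u : ℕ → ℝ), 0 < n → u 0 = 0 → u n = T →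
          (∀ k, k < n → u k ≤ u (k + 1)) →
          (∀ k, k < n → ω (u k) (u (k + 1)) < δ) →
          ‖(∑ k ∈ Finset.range n, Γ (u k) (u (k + 1))) - I‖ < ε :=
  sewing_lemma_general T hT ω hnonneg hdiag hcont hsuper θ hθ Γ halmost
end

section
/- Let p ∈ [1,2) and let σ : [0,T] → ℝ be continuous of finite p-variation. Then the Young integral ∫_0^T σ_u dσ_u exists as the limit of Riemann sums ∑_k σ_{t_k}(σ_{t_{k+1}} − σ_{t_k}) over partitions with mesh tending to zero, and satisfies |∫_s^t σ_u dσ_u − σ_s(σ_t − σ_s)| ≤ C ‖σ‖_{p-var,[s,t]}^2 for a constant C depending only on p. -/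
/-- The set of `p`-variation partition sums `∑_k |σ_{t_{k+1}} − σ_{t_k}|^p` of
a real path `σ` over `[s,t]`; its supremum is `‖σ‖_{p-var,[s,t]}^p`. -/
def pVarSumsReal (p : ℝ) (σ : ℝ → ℝ) (s t : ℝ) : Set ℝ :=
  {r | ∃ (n : ℕ) (u : ℕ → ℝ), 0 < n ∧ u 0 = s ∧ u n = t ∧
    (∀ k, k < n → u k ≤ u (k + 1)) ∧
    r = ∑ k ∈ Finset.range n, |σ (u (k + 1)) - σ (u k)| ^ p}

/-!
The integral is `I s t = (σ t ^ 2 - σ s ^ 2) / 2`. Since `a (b - a) = (b² - a²) / 2 - (b - a)² / 2`,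
a Riemann sum telescopes to `I 0 T` minus half the quadratic variation `∑ (Δσ)²` of the partition.
Once all increments are at most `η` we have `(Δσ)² ≤ η ^ (2 - p) |Δσ| ^ p`, so for `p < 2` uniform
continuity makes the quadratic variation at most `η ^ (2 - p) ‖σ‖_{p-var} ^ p → 0`.
Locally, `I s t - σ s (σ t - σ s) = (σ t - σ s)² / 2`, and `|σ t - σ s| ^ p` is itself a
`p`-variation sum, which gives the bound with `C = 1 / 2`.
-/

open Finset Set

lemma le_of_le_succ_of_le {α : Type*} [Preorder α] {u : ℕ → α} {n : ℕ}
    (hu : ∀ k, k < n → u k ≤ u (k + 1)) {i j : ℕ} (hij : i ≤ j) (hjn : j ≤ n) : u i ≤ u j := by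
  induction j, hij using Nat.le_induction with
  | base => exact le_rfl
  | succ j _ ih => exact (ih (by omega)).trans (hu j (by omega))

lemma mem_Icc_of_le_succ {α : Type*} [Preorder α] {u : ℕ → α} {n : ℕ}
    (hu : ∀ k, k < n → u k ≤ u (k + 1)) {k : ℕ} (hk : k ≤ n) : u k ∈ Icc (u 0) (u n) :=
  ⟨le_of_le_succ_of_le hu k.zero_le hk, le_of_le_succ_of_le hu hk le_rfl⟩

section PVariation

variable {p : ℝ} {σ : ℝ → ℝ} {r a b s t : ℝ}

lemma abs_sub_rpow_mem_pVarSumsReal (hst : s ≤ t) : |σ t - σ s| ^ p ∈ pVarSumsReal p σ s t :=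
  ⟨1, fun k => if k = 0 then s else t, one_pos, by simp, by simp,
    fun k hk => by simp [Nat.lt_one_iff.mp hk, hst], by simp⟩

lemma add_mem_pVarSumsReal_of_le_left (hr : r ∈ pVarSumsReal p σ s t) (ha : a ≤ s) :
    |σ s - σ a| ^ p + r ∈ pVarSumsReal p σ a t := by
  obtain ⟨n, u, -, h0, hnt, hu, rfl⟩ := hr
  refine ⟨n + 1, fun k => if k = 0 then a else u (k - 1), n.succ_pos, by simp, by simp [hnt],
    ?_, ?_⟩
  · rintro (_ | k) hk
    · simpa [h0] using ha
    · simpa using hu k (by omega)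
  · simp [sum_range_succ', h0, add_comm]

lemma add_mem_pVarSumsReal_of_le_right (hr : r ∈ pVarSumsReal p σ s t) (hb : t ≤ b) :
    r + |σ b - σ t| ^ p ∈ pVarSumsReal p σ s b := by
  obtain ⟨n, u, -, h0, hnt, hu, rfl⟩ := hr
  refine ⟨n + 1, fun k => if k ≤ n then u k else b, n.succ_pos, by simp [h0], by simp, ?_, ?_⟩
  · intro k hk
    rcases (Nat.lt_succ_iff.mp hk).lt_or_eq with hk | rfl
    · simpa [hk.le, Nat.succ_le_of_lt hk] using hu k hk
    · simpa [hnt] using hb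
  · rw [sum_range_succ]
    congr 1
    · exact sum_congr rfl fun k hk => by
        simp [(mem_range.mp hk).le, Nat.succ_le_of_lt (mem_range.mp hk)]
    · simp [hnt]

lemma BddAbove.pVarSumsReal_mono (hB : BddAbove (pVarSumsReal p σ a b)) (has : a ≤ s)
    (htb : t ≤ b) : BddAbove (pVarSumsReal p σ s t) := by
  obtain ⟨B, hB⟩ := hB
  refine ⟨B, fun r hr => ?_⟩
  have hext := hB (add_mem_pVarSumsReal_of_le_right (add_mem_pVarSumsReal_of_le_left hr has) htb)
  have := Real.rpow_nonneg (abs_nonneg (σ s - σ a)) p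
  have := Real.rpow_nonneg (abs_nonneg (σ b - σ t)) p
  linarith

lemma sq_sub_le_sSup_pVarSumsReal_rpow (hp : 0 < p) (hB : BddAbove (pVarSumsReal p σ s t))
    (hst : s ≤ t) : (σ t - σ s) ^ 2 ≤ sSup (pVarSumsReal p σ s t) ^ (2 / p) := by
  have hle : |σ t - σ s| ^ p ≤ sSup (pVarSumsReal p σ s t) :=
    le_csSup hB (abs_sub_rpow_mem_pVarSumsReal hst)
  calc (σ t - σ s) ^ 2 = (|σ t - σ s| ^ p) ^ (2 / p) := by
        rw [← Real.rpow_mul (abs_nonneg _), mul_div_cancel₀ _ hp.ne', Real.rpow_two, sq_abs]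
    _ ≤ sSup (pVarSumsReal p σ s t) ^ (2 / p) :=
        Real.rpow_le_rpow (by positivity) hle (by positivity)

end PVariation

lemma sum_range_mul_sub_eq (x : ℕ → ℝ) (n : ℕ) :
    ∑ k ∈ range n, x k * (x (k + 1) - x k) =
      (x n ^ 2 - x 0 ^ 2) / 2 - (∑ k ∈ range n, (x (k + 1) - x k) ^ 2) / 2 := by
  have h (k : ℕ) : x k * (x (k + 1) - x k) =
      (x (k + 1) ^ 2 - x k ^ 2) / 2 - (x (k + 1) - x k) ^ 2 / 2 := by ring
  simp_rw [h, sum_sub_distrib, ← sum_div, sum_range_sub (fun k => x k ^ 2)]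

lemma sq_le_rpow_mul_abs_rpow {x η p : ℝ} (hp : p ≤ 2) (hx : |x| ≤ η) :
    x ^ 2 ≤ η ^ (2 - p) * |x| ^ p := by
  calc x ^ 2 = |x| ^ (2 - p) * |x| ^ p := by
        rw [← Real.rpow_add' (abs_nonneg x) (by norm_num), sub_add_cancel, Real.rpow_two, sq_abs]
    _ ≤ η ^ (2 - p) * |x| ^ p := by gcongr

lemma exists_sum_sq_lt_of_mesh_lt {p a b ε : ℝ} {σ : ℝ → ℝ} (hp : p < 2)
    (hσ : ContinuousOn σ (Icc a b)) (hB : BddAbove (pVarSumsReal p σ a b)) (hε : 0 < ε) :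
    ∃ δ > (0 : ℝ), ∀ (n : ℕ) (u : ℕ → ℝ), 0 < n → u 0 = a → u n = b →
      (∀ k, k < n → u k ≤ u (k + 1)) → (∀ k, k < n → u (k + 1) - u k < δ) →
      ∑ k ∈ range n, (σ (u (k + 1)) - σ (u k)) ^ 2 < ε := by
  set M := |sSup (pVarSumsReal p σ a b)| + 1
  have hM : 0 < M := by positivity
  set η := (ε / M) ^ (2 - p)⁻¹
  have hη : η ^ (2 - p) = ε / M := Real.rpow_inv_rpow (by positivity) (by linarith)
  obtain ⟨δ, hδ, hσδ⟩ := Metric.uniformContinuousOn_iff.mp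
    (isCompact_Icc.uniformContinuousOn_of_continuous hσ) η (by positivity)
  refine ⟨δ, hδ, fun n u hn h0 hnb hu hmesh => ?_⟩
  have hincr (k : ℕ) (hk : k < n) : |σ (u (k + 1)) - σ (u k)| ≤ η := by
    have hmem (j : ℕ) (hj : j ≤ n) : u j ∈ Icc a b := h0 ▸ hnb ▸ mem_Icc_of_le_succ hu hj
    have hdist : dist (u (k + 1)) (u k) < δ := by
      rw [Real.dist_eq, abs_of_nonneg (sub_nonneg.mpr (hu k hk))]
      exact hmesh k hk
    exact (hσδ _ (hmem _ hk) _ (hmem _ hk.le) hdist).le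
  have hS : ∑ k ∈ range n, |σ (u (k + 1)) - σ (u k)| ^ p < M :=
    (le_csSup hB ⟨n, u, hn, h0, hnb, hu, rfl⟩).trans_lt ((le_abs_self _).trans_lt (lt_add_one (|sSup (pVarSumsReal p σ a b)|)))
  calc ∑ k ∈ range n, (σ (u (k + 1)) - σ (u k)) ^ 2
      ≤ ∑ k ∈ range n, η ^ (2 - p) * |σ (u (k + 1)) - σ (u k)| ^ p :=
        sum_le_sum fun k hk => sq_le_rpow_mul_abs_rpow hp.le (hincr k (mem_range.mp hk))
    _ = ε / M * ∑ k ∈ range n, |σ (u (k + 1)) - σ (u k)| ^ p := by rw [← mul_sum, hη]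
    _ < ε / M * M := by gcongr
    _ = ε := div_mul_cancel₀ ε hM.ne'

/-- Young integration for `p < 2`: for continuous `σ` of finite `p`-variation,
the integral `∫_0^T σ dσ` exists as the limit of Riemann sums
`∑ σ_{t_k}(σ_{t_{k+1}} − σ_{t_k})` as the mesh tends to zero, and
`|∫_s^t σ dσ − σ_s(σ_t − σ_s)| ≤ C·‖σ‖_{p-var,[s,t]}^2` with `C` depending
only on `p`. -/
theorem young_integral_self
    (p : ℝ) (hp : 1 ≤ p) (hp2 : p < 2) :
    ∃ C : ℝ, 0 < C ∧
      ∀ (T : ℝ) (σ : ℝ → ℝ), 0 ≤ T → ContinuousOn σ (Set.Icc 0 T) →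
        BddAbove (pVarSumsReal p σ 0 T) →
        ∃ I : ℝ → ℝ → ℝ,
          (∀ ε > (0 : ℝ), ∃ δ > (0 : ℝ),
            ∀ (n : ℕ) (u : ℕ → ℝ), 0 < n → u 0 = 0 → u n = T →
              (∀ k, k < n → u k ≤ u (k + 1)) →
              (∀ k, k < n → u (k + 1) - u k < δ) →
              |(∑ k ∈ Finset.range n,
                  σ (u k) * (σ (u (k + 1)) - σ (u k))) - I 0 T| < ε) ∧
          ∀ s t : ℝ, 0 ≤ s → s ≤ t → t ≤ T →
            |I s t - σ s * (σ t - σ s)| ≤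
              C * sSup (pVarSumsReal p σ s t) ^ (2 / p) := by
  refine ⟨1 / 2, by norm_num, fun T σ _ hσ hB => ⟨fun s t => (σ t ^ 2 - σ s ^ 2) / 2, ?_, ?_⟩⟩
  · intro ε hε
    obtain ⟨δ, hδ, hqv⟩ := exists_sum_sq_lt_of_mesh_lt hp2 hσ hB (by positivity : 0 < 2 * ε)
    refine ⟨δ, hδ, fun n u hn h0 hnT hu hmesh => ?_⟩
    have hlt := hqv n u hn h0 hnT hu hmesh
    have hnn := sum_nonneg fun k (_ : k ∈ range n) => sq_nonneg (σ (u (k + 1)) - σ (u k))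
    rw [sum_range_mul_sub_eq (fun k => σ (u k)), h0, hnT, abs_lt]
    constructor <;> linarith
  · intro s t hs hst htT
    have hsq := sq_sub_le_sSup_pVarSumsReal_rpow (by linarith) (hB.pVarSumsReal_mono hs htT) hst
    calc |(σ t ^ 2 - σ s ^ 2) / 2 - σ s * (σ t - σ s)| = (σ t - σ s) ^ 2 / 2 := by
          rw [show (σ t ^ 2 - σ s ^ 2) / 2 - σ s * (σ t - σ s) = (σ t - σ s) ^ 2 / 2 by ring,
            abs_of_nonneg (by positivity)]
      _ ≤ 1 / 2 * sSup (pVarSumsReal p σ s t) ^ (2 / p) := by linarith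
end
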